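/- Under Assumptions (A) and (B), the expected terminal objective under the Gibbs law converges to the global minimum value: ∫_{ℝ^d} f(y) π_λ(y) dy → f_* as λ ↓ 0. -/

import Mathlib

/-! Laplace's principle. Writing `g = f - f_*` and `c = α_λ → ∞`, the Gibbs mean of `g` is
`∫ g e^{-cg} / ∫ e^{-cg}`. Split the numerator at the level `g = δ`: the part where `g ≤ δ` is
at most `δ` times the denominator, while on `{g > δ}` one has `g e^{-cg} ≤ e^{-(c-2)δ} e^{-g}`.
The denominator is at least `e^{-(c-1)δ/2} ∫_{g < δ/2} e^{-g}`, and the last integral is positive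
because `{g < δ/2}` is an open neighbourhood of the minimiser. Hence the Gibbs mean of `g` is at
most `δ + C_δ e^{(3-c)δ/2}`, which tends to `δ`. -/

open MeasureTheory Real Filter Topology
open scoped RealInnerProductSpace

noncomputable section

/-- The heat kernel with diffusivity `β`: `G_r(z) = (4πβr)^(−d/2) exp(−‖z‖²/(4βr))`. -/
def heatK {d : ℕ} (β r : ℝ) (z : EuclideanSpace ℝ (Fin d)) : ℝ :=
  (4 * π * β * r) ^ (-(d : ℝ) / 2) * Real.exp (-‖z‖ ^ 2 / (4 * β * r))

/-- The Laplacian of a scalar function on `ℝ^d`. -/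
def lap {d : ℕ} (g : EuclideanSpace ℝ (Fin d) → ℝ) (x : EuclideanSpace ℝ (Fin d)) : ℝ :=
  ∑ i : Fin d,
    fderiv ℝ (fun z => fderiv ℝ g z (EuclideanSpace.single i 1)) x (EuclideanSpace.single i 1)

/-- The normalized Gibbs density `π_λ(y) = e^{−α_λ f(y)} / M_λ`, with `α_λ = T/(2λβ)`. -/
def gibbsDen {d : ℕ} (T β lam : ℝ) (f : EuclideanSpace ℝ (Fin d) → ℝ)
    (y : EuclideanSpace ℝ (Fin d)) : ℝ :=
  Real.exp (-(T / (2 * lam * β)) * f y) / ∫ z, Real.exp (-(T / (2 * lam * β)) * f z)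

/-- `h_λ(t,x) = ∫ G_{T−t}(x−y) π_λ(y) dy`. -/
def hHC {d : ℕ} (T β lam : ℝ) (f : EuclideanSpace ℝ (Fin d) → ℝ) (t : ℝ)
    (x : EuclideanSpace ℝ (Fin d)) : ℝ :=
  ∫ y, heatK β (T - t) (x - y) * gibbsDen T β lam f y

/-- The conditional terminal density `η_{λ,t,x}(y) = G_{T−t}(x−y) π_λ(y) / h_λ(t,x)`. -/
def etaHC {d : ℕ} (T β lam : ℝ) (f : EuclideanSpace ℝ (Fin d) → ℝ) (t : ℝ)
    (x y : EuclideanSpace ℝ (Fin d)) : ℝ :=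
  heatK β (T - t) (x - y) * gibbsDen T β lam f y / hHC T β lam f t x

/-- The barycenter `a_λ(t,x) = ∫ y η_{λ,t,x}(y) dy`. -/
def aHC {d : ℕ} (T β lam : ℝ) (f : EuclideanSpace ℝ (Fin d) → ℝ) (t : ℝ)
    (x : EuclideanSpace ℝ (Fin d)) : EuclideanSpace ℝ (Fin d) :=
  ∫ y, etaHC T β lam f t x y • y

/-- The optimal drift `u*_λ(t,x) = 2β ∇_x log h_λ(t,x)`. -/
def uHC {d : ℕ} (T β lam : ℝ) (f : EuclideanSpace ℝ (Fin d) → ℝ) (t : ℝ)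
    (x : EuclideanSpace ℝ (Fin d)) : EuclideanSpace ℝ (Fin d) :=
  (2 * β) • gradient (fun z => Real.log (hHC T β lam f t z)) x

/-- The potential `Φ_λ(t,x) = −2β log h_λ(t,x)`. -/
def PhiHC {d : ℕ} (T β lam : ℝ) (f : EuclideanSpace ℝ (Fin d) → ℝ) (t : ℝ)
    (x : EuclideanSpace ℝ (Fin d)) : ℝ :=
  -(2 * β) * Real.log (hHC T β lam f t x)

/-- The value function `V_λ(t,x) = −(2λβ/T) log h_λ(t,x) − (2λβ/T) log M_λ`. -/
def VHC {d : ℕ} (T β lam : ℝ) (f : EuclideanSpace ℝ (Fin d) → ℝ) (t : ℝ)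
    (x : EuclideanSpace ℝ (Fin d)) : ℝ :=
  -(2 * lam * β / T) * Real.log (hHC T β lam f t x)
    - (2 * lam * β / T) * Real.log (∫ z, Real.exp (-(T / (2 * lam * β)) * f z))

namespace GibbsLaplace

variable {X : Type*} [MeasurableSpace X] {μ : Measure X}

def gibbsMean (μ : Measure X) (f : X → ℝ) (c : ℝ) : ℝ :=
  (∫ x, f x * exp (-c * f x) ∂μ) / ∫ x, exp (-c * f x) ∂μ

lemma mul_exp_neg_mul_le_of_le {c δ s : ℝ} (hc : 2 ≤ c) (hδs : δ ≤ s) :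
    s * exp (-c * s) ≤ exp (-(c - 2) * δ) * exp (-s) := by
  have hsexp : s * exp (-s) ≤ 1 := (mul_exp_neg_le_exp_neg_one s).trans (by simp)
  calc s * exp (-c * s) = s * exp (-s) * exp (-(c - 2) * s) * exp (-s) := by
        rw [mul_assoc, mul_assoc, ← exp_add, ← exp_add]; ring_nf
    _ ≤ 1 * exp (-(c - 2) * δ) * exp (-s) := by
        gcongr ?_ * ?_ * _
        exact exp_le_exp.2 (by nlinarith)
    _ = exp (-(c - 2) * δ) * exp (-s) := by rw [one_mul]

lemma mul_exp_neg_mul_le_add {c δ : ℝ} (hc : 2 ≤ c) (hδ : 0 ≤ δ) (s : ℝ) :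
    s * exp (-c * s) ≤ δ * exp (-c * s) + exp (-(c - 2) * δ) * exp (-s) := by
  rcases le_total s δ with hsδ | hδs
  · linarith [mul_le_mul_of_nonneg_right hsδ (exp_pos (-c * s)).le,
      mul_pos (exp_pos (-(c - 2) * δ)) (exp_pos (-s))]
  · linarith [mul_nonneg hδ (exp_pos (-c * s)).le, mul_exp_neg_mul_le_of_le hc hδs]

lemma integrable_mul_exp_neg_mul {g : X → ℝ} (hg : AEStronglyMeasurable g μ)
    (hg0 : ∀ x, 0 ≤ g x) {c : ℝ} (hc : 0 < c) (hI : Integrable (fun x => exp (-(c / 2) * g x)) μ) :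
    Integrable (fun x => g x * exp (-c * g x)) μ := by
  refine (hI.const_mul (2 / c)).mono' ?_ (Eventually.of_forall fun x => ?_)
  · exact hg.mul (continuous_exp.comp_aestronglyMeasurable (hg.const_mul (-c)))
  have hbound : c / 2 * g x * exp (-(c / 2 * g x)) ≤ 1 :=
    (mul_exp_neg_le_exp_neg_one _).trans (by simp)
  rw [norm_of_nonneg (mul_nonneg (hg0 x) (exp_pos _).le)]
  calc g x * exp (-c * g x)
      = 2 / c * (c / 2 * g x * exp (-(c / 2 * g x))) * exp (-(c / 2) * g x) := by
        rw [mul_assoc, mul_assoc, ← exp_add]; field_simp; ring_nf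
    _ ≤ 2 / c * 1 * exp (-(c / 2) * g x) := by gcongr
    _ = 2 / c * exp (-(c / 2) * g x) := by rw [mul_one]

lemma gibbsMean_add_const [NeZero μ] {f : X → ℝ} {c : ℝ}
    (hI : Integrable (fun x => exp (-c * f x)) μ)
    (hfI : Integrable (fun x => f x * exp (-c * f x)) μ) (m : ℝ) :
    gibbsMean μ (fun x => f x + m) c = gibbsMean μ f c + m := by
  have hD := integral_exp_pos hI
  have hden : ∀ x, exp (-c * (f x + m)) = exp (-c * m) * exp (-c * f x) := fun x => by
    rw [← exp_add]; ring_nf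
  have hnum : ∀ x, (f x + m) * exp (-c * (f x + m)) =
      exp (-c * m) * (f x * exp (-c * f x) + m * exp (-c * f x)) := fun x => by
    rw [hden]; ring
  simp only [gibbsMean, hnum]
  simp only [hden, integral_const_mul, integral_add hfI (hI.const_mul m)]
  rw [mul_div_mul_left _ _ (exp_pos _).ne', add_div, mul_div_cancel_right₀ _ hD.ne']

section Topological

variable [TopologicalSpace X] [OpensMeasurableSpace X] [μ.IsOpenPosMeasure]

lemma gibbsMean_le_add_mul_exp {g : X → ℝ} (hg : Continuous g) (hg0 : ∀ x, 0 ≤ g x) {x₀ : X}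
    (hx₀ : g x₀ = 0) (hint : ∀ c > 0, Integrable (fun x => exp (-c * g x)) μ)
    {δ c : ℝ} (hδ : 0 < δ) (hc : 2 ≤ c) :
    gibbsMean μ g c ≤ δ + (∫ x, exp (-g x) ∂μ) / (∫ x in {x | g x < δ / 2}, exp (-g x) ∂μ) *
      exp ((3 - c) * δ / 2) := by
  set U := {x | g x < δ / 2}
  have hU : IsOpen U := isOpen_lt hg continuous_const
  have hI₁ : Integrable (fun x => exp (-g x)) μ := by simpa using hint 1 one_pos
  have hIc := hint c (by linarith)
  have hA : 0 < ∫ x in U, exp (-g x) ∂μ := by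
    have : NeZero (μ.restrict U) := ⟨by
      rw [Ne, Measure.restrict_eq_zero]
      exact (hU.measure_pos μ ⟨x₀, by simp [U, hx₀, hδ]⟩).ne'⟩
    exact integral_exp_pos hI₁.restrict
  have hD : exp (-(c - 1) * (δ / 2)) * (∫ x in U, exp (-g x) ∂μ) ≤
      ∫ x, exp (-c * g x) ∂μ := by
    rw [← integral_const_mul]
    calc ∫ x in U, exp (-(c - 1) * (δ / 2)) * exp (-g x) ∂μ
        ≤ ∫ x in U, exp (-c * g x) ∂μ := by
          refine setIntegral_mono_on (hI₁.const_mul _).integrableOn hIc.integrableOn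
            hU.measurableSet fun x (hx : g x < δ / 2) => ?_
          rw [← exp_add]
          exact exp_le_exp.2 (by nlinarith)
      _ ≤ ∫ x, exp (-c * g x) ∂μ :=
          setIntegral_le_integral hIc (Eventually.of_forall fun x => (exp_pos _).le)
  have hN : ∫ x, g x * exp (-c * g x) ∂μ ≤
      δ * (∫ x, exp (-c * g x) ∂μ) + exp (-(c - 2) * δ) * ∫ x, exp (-g x) ∂μ := by
    rw [← integral_const_mul, ← integral_const_mul,
      ← integral_add (hIc.const_mul _) (hI₁.const_mul _)]
    exact integral_mono
      (integrable_mul_exp_neg_mul hg.aestronglyMeasurable hg0 (by linarith) (hint _ (by linarith)))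
      ((hIc.const_mul _).add (hI₁.const_mul _)) fun x => mul_exp_neg_mul_le_add hc hδ.le (g x)
  have hD0 : 0 < ∫ x, exp (-c * g x) ∂μ := lt_of_lt_of_le (by positivity) hD
  have hexp : exp ((3 - c) * δ / 2) = exp (-(c - 2) * δ) / exp (-(c - 1) * (δ / 2)) := by
    rw [← exp_sub]; ring_nf
  calc gibbsMean μ g c
      ≤ (δ * (∫ x, exp (-c * g x) ∂μ) + exp (-(c - 2) * δ) * ∫ x, exp (-g x) ∂μ) /
          ∫ x, exp (-c * g x) ∂μ := div_le_div_of_nonneg_right hN hD0.le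
    _ = δ + exp (-(c - 2) * δ) * (∫ x, exp (-g x) ∂μ) / ∫ x, exp (-c * g x) ∂μ := by
        rw [add_div, mul_div_cancel_right₀ _ hD0.ne', mul_div_assoc]
    _ ≤ δ + exp (-(c - 2) * δ) * (∫ x, exp (-g x) ∂μ) /
          (exp (-(c - 1) * (δ / 2)) * (∫ x in U, exp (-g x) ∂μ)) := by
        gcongr
    _ = _ := by rw [hexp]; field_simp

theorem tendsto_gibbsMean_atTop_zero {g : X → ℝ} (hg : Continuous g) (hg0 : ∀ x, 0 ≤ g x)
    {x₀ : X} (hx₀ : g x₀ = 0) (hint : ∀ c > 0, Integrable (fun x => exp (-c * g x)) μ) :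
    Tendsto (gibbsMean μ g) atTop (𝓝 0) := by
  refine tendsto_order.2 ⟨fun a ha => Eventually.of_forall fun c => ha.trans_le ?_,
    fun b hb => ?_⟩
  · exact div_nonneg (integral_nonneg fun x => mul_nonneg (hg0 x) (exp_pos _).le)
      (integral_nonneg fun x => (exp_pos _).le)
  have hexp : Tendsto (fun c : ℝ => exp ((3 - c) * (b / 2) / 2)) atTop (𝓝 0) :=
    tendsto_exp_atBot.comp <| ((tendsto_atBot_add_const_left atTop 3
      tendsto_neg_atTop_atBot).atBot_mul_const (half_pos hb)).atBot_div_const two_pos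
  have hlim := (hexp.const_mul <|
    (∫ x, exp (-g x) ∂μ) / ∫ x in {x | g x < b / 2 / 2}, exp (-g x) ∂μ).const_add (b / 2)
  rw [mul_zero, add_zero] at hlim
  filter_upwards [hlim.eventually (gt_mem_nhds (half_lt_self hb)), eventually_ge_atTop 2]
    with c hcb hc
  exact (gibbsMean_le_add_mul_exp hg hg0 hx₀ hint (half_pos hb) hc).trans_lt hcb

theorem tendsto_gibbsMean_atTop {f : X → ℝ} (hf : Continuous f) {x₀ : X}
    (hmin : ∀ x, f x₀ ≤ f x) (hint : ∀ c > 0, Integrable (fun x => exp (-c * f x)) μ) :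
    Tendsto (gibbsMean μ f) atTop (𝓝 (f x₀)) := by
  set g := fun x => f x - f x₀
  have hg : Continuous g := hf.sub continuous_const
  have hg0 : ∀ x, 0 ≤ g x := fun x => sub_nonneg.2 (hmin x)
  have hg_int : ∀ c > 0, Integrable (fun x => exp (-c * g x)) μ := fun c hc =>
    ((hint c hc).const_mul (exp (c * f x₀))).congr <| Eventually.of_forall fun x => by
      simp only [g]; rw [← exp_add]; ring_nf
  have : Nonempty X := ⟨x₀⟩
  have hlim := (tendsto_gibbsMean_atTop_zero hg hg0 (sub_self _) hg_int).add_const (f x₀)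
  rw [zero_add] at hlim
  refine hlim.congr' <| (eventually_gt_atTop 0).mono fun c hc => ?_
  have hshift := gibbsMean_add_const (hg_int c hc)
    (integrable_mul_exp_neg_mul hg.aestronglyMeasurable hg0 hc (hg_int _ (half_pos hc))) (f x₀)
  simpa [g] using hshift.symm

end Topological

end GibbsLaplace

theorem expected_terminal_objective_general (d : ℕ) (T β : ℝ)
    (hT : 0 < T) (hβ : 0 < β)
    (f : EuclideanSpace ℝ (Fin d) → ℝ)
    (hf : ContDiff ℝ 2 f)
    (hint : ∀ c > 0,
      Integrable (fun y => Real.exp (-c * f y)) ∧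
      Integrable (fun y => ‖gradient f y‖ * Real.exp (-c * f y)) ∧
      Integrable (fun y => ‖iteratedFDeriv ℝ 2 f y‖ * Real.exp (-c * f y)))
    (xstar : EuclideanSpace ℝ (Fin d))
    (hmin : ∀ y, f xstar ≤ f y) :
    Tendsto (fun lam : ℝ => ∫ y, f y * gibbsDen T β lam f y) (𝓝[>] 0) (𝓝 (f xstar)) := by
  have hα : Tendsto (fun lam : ℝ => T / (2 * lam * β)) (𝓝[>] 0) atTop :=
    (tendsto_inv_nhdsGT_zero.const_mul_atTop (div_pos hT (mul_pos two_pos hβ))).congr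
      fun lam => by field_simp
  have hgibbs := GibbsLaplace.tendsto_gibbsMean_atTop hf.continuous hmin fun c hc => (hint c hc).1
  refine (hgibbs.comp hα).congr fun lam => ?_
  simp only [Function.comp, GibbsLaplace.gibbsMean, gibbsDen, mul_div_assoc', integral_div]

theorem expected_terminal_objective (d : ℕ) (hd : 1 ≤ d) (T β : ℝ)
    (hT : 0 < T) (hβ : 0 < β)
    (f : EuclideanSpace ℝ (Fin d) → ℝ)
    (hf : ContDiff ℝ 2 f)
    (hbdd : BddBelow (Set.range f))
    (hcoer : Tendsto f (cocompact (EuclideanSpace ℝ (Fin d))) atTop)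
    (hint : ∀ c > 0,
      Integrable (fun y => Real.exp (-c * f y)) ∧
      Integrable (fun y => ‖gradient f y‖ * Real.exp (-c * f y)) ∧
      Integrable (fun y => ‖iteratedFDeriv ℝ 2 f y‖ * Real.exp (-c * f y)))
    (xstar : EuclideanSpace ℝ (Fin d))
    (hmin : ∀ y, f xstar ≤ f y)
    (huniq : ∀ y, f y = f xstar → y = xstar) :
    Tendsto (fun lam : ℝ => ∫ y, f y * gibbsDen T β lam f y) (𝓝[>] 0) (𝓝 (f xstar)) :=
  expected_terminal_objective_general d T β hT hβ f hf hint xstar hmin
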